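/- arXiv:2405.07096 — 2 statements merged into one kernel-verified Lean document; each statement's English description precedes it below -/
import Mathlib

section
/- Let 𝒯 be an encoding tree of height 2 for a multi-relational graph, where the root λ has children α_1,...,α_k (the communities) and each α_m has leaf children. If α_{o₁} and α_{o₂} are merged into a new node α_n with T_{α_n} = T_{α_{o₁}} ∪ T_{α_{o₂}} (disjoint union), then the change in MrSE satisfies ΔMrSE = -p'_{→α_n} log p'_{α_n} - p'_{α_{o₁}} log(p'_{α_{o₁}}/p'_{α_n}) - p'_{α_{o₂}} log(p'_{α_{o₂}}/p'_{α_n}) + p'_{→α_{o₁}} log p'_{α_{o₁}} + p'_{→α_{o₂}} log p'_{α_{o₂}}, where MrSE(𝒯) = -Σ_{α∈𝒯, α≠λ} p'_{→α} log(p'_α/p'_{α⁻}). -/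
open Finset

variable {V : Type*} [Fintype V] [DecidableEq V]

/-- Probability of being in community `C` under node distribution `x`. -/
noncomputable def pIn (x : V → ℝ) (C : Finset V) : ℝ := ∑ i ∈ C, x i

/-- Probability of entering community `C` under node distribution `x` and
one-step transition probabilities `P j i` (from `i` to `j`). -/
noncomputable def pEnter (x : V → ℝ) (P : V → V → ℝ) (C : Finset V) : ℝ :=
  ∑ i ∈ Finset.univ \ C, x i * ∑ j ∈ C, P j i

/-- MrSE of a height-2 encoding tree whose middle level is the family of
communities `Part`: the community `C` contributes `p'_{→C} · log (p'_C / p'_λ)`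
(with `p'_λ = 1`) and each of its leaf children `{v}` contributes
`x'_v · log (x'_v / p'_C)`. -/
noncomputable def mrSE2 (x : V → ℝ) (P : V → V → ℝ) (Part : Finset (Finset V)) : ℝ :=
  -∑ C ∈ Part, (pEnter x P C * Real.log (pIn x C)
      + ∑ v ∈ C, x v * Real.log (x v / pIn x C))

/-- merging two communities `α_{o₁}, α_{o₂}` of a height-2
encoding tree into `α_n` (with `T_{α_n} = T_{α_{o₁}} ∪ T_{α_{o₂}}`) changes the
MrSE by
`ΔMrSE = -p'_{→α_n} log p'_{α_n} - p'_{α_{o₁}} log (p'_{α_{o₁}}/p'_{α_n})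
  - p'_{α_{o₂}} log (p'_{α_{o₂}}/p'_{α_n}) + p'_{→α_{o₁}} log p'_{α_{o₁}}
  + p'_{→α_{o₂}} log p'_{α_{o₂}}`. -/
theorem merge_delta_MrSE
    (x : V → ℝ) (P : V → V → ℝ) (Part : Finset (Finset V)) (o₁ o₂ : Finset V)
    (hxpos : ∀ v, 0 < x v) (hPnonneg : ∀ j i, 0 ≤ P j i)
    (ho₁ : o₁ ∈ Part) (ho₂ : o₂ ∈ Part) (hne : o₁ ≠ o₂)
    (ho₁ne : o₁.Nonempty) (ho₂ne : o₂.Nonempty)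
    (hdisj : ∀ C₁ ∈ Part, ∀ C₂ ∈ Part, C₁ ≠ C₂ → Disjoint C₁ C₂) :
    mrSE2 x P (insert (o₁ ∪ o₂) ((Part.erase o₁).erase o₂)) - mrSE2 x P Part
      = -pEnter x P (o₁ ∪ o₂) * Real.log (pIn x (o₁ ∪ o₂))
        - pIn x o₁ * Real.log (pIn x o₁ / pIn x (o₁ ∪ o₂))
        - pIn x o₂ * Real.log (pIn x o₂ / pIn x (o₁ ∪ o₂))
        + pEnter x P o₁ * Real.log (pIn x o₁)
        + pEnter x P o₂ * Real.log (pIn x o₂) := by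
  classical
  have hd12 : Disjoint o₁ o₂ := hdisj o₁ ho₁ o₂ ho₂ hne
  have hp1 : 0 < pIn x o₁ := Finset.sum_pos (fun v _ => hxpos v) ho₁ne
  have hp2 : 0 < pIn x o₂ := Finset.sum_pos (fun v _ => hxpos v) ho₂ne
  have hpun : pIn x (o₁ ∪ o₂) = pIn x o₁ + pIn x o₂ := Finset.sum_union hd12
  have hpn : 0 < pIn x (o₁ ∪ o₂) := by rw [hpun]; positivity
  -- union not in the doubly-erased set
  have hnotmem : (o₁ ∪ o₂) ∉ (Part.erase o₁).erase o₂ := by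
    intro hmem
    have hC : (o₁ ∪ o₂) ∈ Part := Finset.mem_of_mem_erase (Finset.mem_of_mem_erase hmem)
    have hne1 : (o₁ ∪ o₂) ≠ o₁ := Finset.ne_of_mem_erase (Finset.mem_of_mem_erase hmem)
    have hd : Disjoint (o₁ ∪ o₂) o₁ := hdisj _ hC _ ho₁ hne1
    have : Disjoint o₁ o₁ := hd.mono_left Finset.subset_union_left
    exact ho₁ne.ne_empty (Finset.disjoint_self_iff_empty _ |>.mp this)
  set f : Finset V → ℝ := fun C => pEnter x P C * Real.log (pIn x C)
      + ∑ v ∈ C, x v * Real.log (x v / pIn x C) with hf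
  have hnew : ∑ C ∈ insert (o₁ ∪ o₂) ((Part.erase o₁).erase o₂), f C
      = f (o₁ ∪ o₂) + ∑ C ∈ (Part.erase o₁).erase o₂, f C :=
    Finset.sum_insert hnotmem
  have ho₂' : o₂ ∈ Part.erase o₁ := Finset.mem_erase.mpr ⟨hne.symm, ho₂⟩
  have hold : ∑ C ∈ Part, f C
      = f o₁ + (f o₂ + ∑ C ∈ (Part.erase o₁).erase o₂, f C) := by
    rw [← Finset.add_sum_erase _ f ho₁, ← Finset.add_sum_erase _ f ho₂']
  have hΔ : mrSE2 x P (insert (o₁ ∪ o₂) ((Part.erase o₁).erase o₂)) - mrSE2 x P Part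
      = -(f (o₁ ∪ o₂) - f o₁ - f o₂) := by
    simp only [mrSE2, ← hf, hnew, hold]; ring
  rw [hΔ]
  -- expand the leaf sums
  have hleaf : ∀ (C : Finset V) (p : ℝ), 0 < p →
      ∑ v ∈ C, x v * Real.log (x v / p)
        = ∑ v ∈ C, x v * Real.log (x v) - (∑ v ∈ C, x v) * Real.log p := by
    intro C p hp
    rw [Finset.sum_mul, ← Finset.sum_sub_distrib]
    refine Finset.sum_congr rfl fun v _ => ?_
    rw [Real.log_div (hxpos v).ne' hp.ne']; ring
  have e1 := hleaf o₁ _ hp1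
  have e2 := hleaf o₂ _ hp2
  have eun := hleaf (o₁ ∪ o₂) _ hpn
  have hsplit : ∑ v ∈ o₁ ∪ o₂, x v * Real.log (x v)
      = ∑ v ∈ o₁, x v * Real.log (x v) + ∑ v ∈ o₂, x v * Real.log (x v) :=
    Finset.sum_union hd12
  have hl1 : Real.log (pIn x o₁ / pIn x (o₁ ∪ o₂))
      = Real.log (pIn x o₁) - Real.log (pIn x (o₁ ∪ o₂)) :=
    Real.log_div hp1.ne' hpn.ne'
  have hl2 : Real.log (pIn x o₂ / pIn x (o₁ ∪ o₂))
      = Real.log (pIn x o₂) - Real.log (pIn x (o₁ ∪ o₂)) :=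
    Real.log_div hp2.ne' hpn.ne'
  simp only [hf, e1, e2, eun, hsplit, hl1, hl2]
  have : (∑ v ∈ o₁ ∪ o₂, x v) = pIn x o₁ + pIn x o₂ := hpun
  rw [show (∑ v ∈ o₁ ∪ o₂, x v) = pIn x (o₁ ∪ o₂) from rfl,
      show (∑ v ∈ o₁, x v) = pIn x o₁ from rfl,
      show (∑ v ∈ o₂, x v) = pIn x o₂ from rfl, hpun]
  ring
end

section
/- For a height-2 encoding tree with communities {α_1,...,α_k} partitioning V, the MrSE decomposes as H^𝒯(G') = -Σ_{m=1}^k p'_{→α_m} log p'_{α_m} - Σ_{m=1}^k Σ_{γ: γ⁻=α_m} p'_{→γ} log(x'_{T_γ}/p'_{α_m}), and when there are no self-loops (P(i|i)=0 and hence p'_{→γ_i} = x'_i for leaves), this equals -Σ_m p'_{→α_m} log p'_{α_m} + Σ_m p'_{α_m} H_m, where H_m = -Σ_{i∈T_{α_m}} (x'_i/p'_{α_m}) log(x'_i/p'_{α_m}) is the Shannon entropy of the conditional distribution within community m. -/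
open Finset

/-- for a height-2 encoding tree whose communities
`T 0, …, T (k-1)` partition `V` (the community containing `v` is `cm v`), the
MrSE decomposes as
`H^𝒯(G') = -∑_m p'_{→α_m} log p'_{α_m} - ∑_m ∑_{γ:γ⁻=α_m} p'_{→γ} log (x'_{T_γ}/p'_{α_m})`,
and when there are no self-loops (so that by stationarity `p'_{→γ_i} = x'_i`),
it equals `-∑_m p'_{→α_m} log p'_{α_m} + ∑_m p'_{α_m} H_m` with
`H_m = -∑_{i∈T_m} (x'_i/p'_{α_m}) log (x'_i/p'_{α_m})`. -/
theorem height_two_MrSE_decomposition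
    (V : Type*) [Fintype V] [DecidableEq V]
    (k : ℕ)
    (x' : V → ℝ) (P : V → V → ℝ) (T : Fin k → Finset V) (cm : V → Fin k)
    (hx'pos : ∀ i, 0 < x' i) (hx'sum : ∑ i, x' i = 1)
    (hpart : ∀ v : V, ∀ m : Fin k, v ∈ T m ↔ m = cm v)
    (hppos : ∀ m, 0 < ∑ i ∈ T m, x' i)
    (hstat : ∀ i, ∑ j, x' j * P i j = x' i)
    (hnoself : ∀ i, P i i = 0) :
    (-(∑ m, (∑ i ∈ Finset.univ \ T m, x' i * ∑ j ∈ T m, P j i) *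
          Real.log ((∑ i ∈ T m, x' i) / 1))
      - (∑ v : V, (∑ j ∈ Finset.univ \ {v}, x' j * P v j) *
          Real.log (x' v / ∑ i ∈ T (cm v), x' i))
      =
      -(∑ m, (∑ i ∈ Finset.univ \ T m, x' i * ∑ j ∈ T m, P j i) *
          Real.log (∑ i ∈ T m, x' i))
      - (∑ m, ∑ v ∈ T m, (∑ j ∈ Finset.univ \ {v}, x' j * P v j) *
          Real.log (x' v / ∑ i ∈ T m, x' i)))
    ∧
    (-(∑ m, (∑ i ∈ Finset.univ \ T m, x' i * ∑ j ∈ T m, P j i) *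
          Real.log ((∑ i ∈ T m, x' i) / 1))
      - (∑ v : V, (∑ j ∈ Finset.univ \ {v}, x' j * P v j) *
          Real.log (x' v / ∑ i ∈ T (cm v), x' i))
      =
      -(∑ m, (∑ i ∈ Finset.univ \ T m, x' i * ∑ j ∈ T m, P j i) *
          Real.log (∑ i ∈ T m, x' i))
      + ∑ m, (∑ i ∈ T m, x' i) *
          (-(∑ i ∈ T m, (x' i / ∑ i' ∈ T m, x' i') *
              Real.log (x' i / ∑ i' ∈ T m, x' i')))) := by
  have hT : ∀ m, T m = Finset.univ.filter (fun v => cm v = m) := by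
    intro m; ext v; simp [hpart v m, eq_comm]
  have hsplit : ∀ (g : V → ℝ), ∑ v : V, g v = ∑ m, ∑ v ∈ T m, g v := by
    intro g
    rw [show (∑ m, ∑ v ∈ T m, g v) = ∑ m, ∑ v ∈ Finset.univ.filter (fun v => cm v = m), g v from by
      exact Finset.sum_congr rfl (fun m _ => by rw [hT m])]
    exact (Finset.sum_fiberwise _ _ _).symm
  have key : ∀ v : V, ∑ j ∈ Finset.univ \ {v}, x' j * P v j = x' v := by
    intro v
    have := hstat v
    rw [← Finset.sum_erase_add _ _ (Finset.mem_univ v), hnoself v] at this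
    simpa [Finset.sdiff_singleton_eq_erase] using this
  have h1 : ∀ m, ∑ v ∈ T m, (∑ j ∈ Finset.univ \ {v}, x' j * P v j) *
          Real.log (x' v / ∑ i ∈ T (cm v), x' i)
      = ∑ v ∈ T m, (∑ j ∈ Finset.univ \ {v}, x' j * P v j) *
          Real.log (x' v / ∑ i ∈ T m, x' i) := by
    intro m
    refine Finset.sum_congr rfl (fun v hv => ?_)
    rw [((hpart v m).mp hv).symm]
  have h2 : ∀ m, ∑ v ∈ T m, (∑ j ∈ Finset.univ \ {v}, x' j * P v j) *
          Real.log (x' v / ∑ i ∈ T (cm v), x' i)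
      = -((∑ i ∈ T m, x' i) * (-(∑ i ∈ T m, (x' i / ∑ i' ∈ T m, x' i') *
              Real.log (x' i / ∑ i' ∈ T m, x' i')))) := by
    intro m
    rw [h1 m, mul_neg, neg_neg, Finset.mul_sum]
    refine Finset.sum_congr rfl (fun v hv => ?_)
    rw [key v]
    have hp := (hppos m).ne'
    field_simp
  constructor
  · simp only [div_one]
    rw [hsplit (fun v => (∑ j ∈ Finset.univ \ {v}, x' j * P v j) *
          Real.log (x' v / ∑ i ∈ T (cm v), x' i))]
    rw [Finset.sum_congr rfl (fun m _ => h1 m)]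
  · simp only [div_one]
    rw [hsplit (fun v => (∑ j ∈ Finset.univ \ {v}, x' j * P v j) *
          Real.log (x' v / ∑ i ∈ T (cm v), x' i))]
    rw [Finset.sum_congr rfl (fun m _ => h2 m)]
    rw [Finset.sum_neg_distrib]
    ring
end
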